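/- arXiv:math/0611920 — 2 statements merged into one kernel-verified Lean document; each statement's English description precedes it below -/
import Mathlib

section
/- Let C be an open cone in a finite-dimensional vector space containing no lines, with cross section D having compact closure. If a sequence (x_n) in D converges in the usual (Euclidean) sense to a point x ∈ closure(D), then the functions r_C(·,x_n) − r_C(b,x_n) converge pointwise on C to r_C(·,x) − r_C(b,x). Conversely, a sequence in D converges pointwise in this reverse-Funk sense to ψ_x for some x ∈ ∂D if and only if it converges in the usual sense to x. -/
open Set Filter Topology

variable {V : Type*} [NormedAddCommGroup V] [NormedSpace ℝ V] [FiniteDimensional ℝ V]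

/-- An open cone: non-empty, open, convex, invariant under positive scaling, not containing 0. -/
def IsOpenCone (T : Set V) : Prop :=
  T.Nonempty ∧ IsOpen T ∧ Convex ℝ T ∧ (∀ c : ℝ, 0 < c → ∀ u ∈ T, c • u ∈ T) ∧ (0 : V) ∉ T

/-- The gauge `M_T(y/x) = inf {λ > 0 : λ • x - y ∈ closure T}`. -/
noncomputable def funkM (T : Set V) (y x : V) : ℝ :=
  sInf {l : ℝ | 0 < l ∧ l • x - y ∈ closure T}

/-- The Funk metric `F_T(x,y) = log inf {λ > 0 : λ • y - x ∈ closure T}`. -/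
noncomputable def funkF (T : Set V) (x y : V) : ℝ := Real.log (funkM T x y)

/-- The reverse Funk metric `r_T(x,y) = F_T(y,x)`. -/
noncomputable def revF (T : Set V) (x y : V) : ℝ := Real.log (funkM T y x)

/-- The Hilbert metric as the symmetrisation of the Funk metric. -/
noncomputable def hilD (T : Set V) (x y : V) : ℝ := funkF T x y + revF T x y

/-- The dual cone, as a set of continuous linear functionals. -/
def dualCone (T : Set V) : Set (V →L[ℝ] ℝ) := {z | ∀ u ∈ T, 0 ≤ z u}

/-- The open tangent cone `τ(T,x) = {λ (w - x) : λ > 0, w ∈ T}`. -/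
def openTangent (T : Set V) (x : V) : Set V :=
  {v | ∃ l : ℝ, 0 < l ∧ ∃ w ∈ T, v = l • (w - x)}

/-!
For `u` in the open cone `C`, the gauge `y ↦ M_C(y/u)` is Lipschitz, because a ball around `u`
lies in `C`, and it is positive on `closure C \ {0}` because `closure C` contains no line. Hence
`f_x := r_C(·,x) - r_C(b,x)` depends continuously on `x ∈ closure D`, which is the first claim and
the easy half of the second.

Conversely, `f_x = f_y` on `C` means `M_C(x/·) = c * M_C(y/·)` for a constant `c > 0`. Along
`u = t • b + y` one has `M_C(y/u) ≤ k/(t+k)` whenever `k • b - y ∈ C`, and letting `t → 0⁺` gives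
`c • y - x ∈ closure C`; symmetrically `c⁻¹ • x - y ∈ closure C`, so `x = c • y`, and `c = 1`
on the cross section. By compactness of `closure D`, every cluster point of a sequence
with `f_{xₙ} → f_x` pointwise is therefore `x` itself.
-/

theorem MapClusterPt.eq_of_tendsto {α X : Type*} [TopologicalSpace X] [T2Space X]
    {F : Filter α} {u : α → X} {x y : X} (hx : MapClusterPt x F u) (hu : Tendsto u F (𝓝 y)) :
    x = y :=
  eq_of_nhds_neBot (hx.clusterPt.neBot.mono (inf_le_inf_left _ hu))

section FunkGauge

variable {E : Type*} [NormedAddCommGroup E] [NormedSpace ℝ E] {C : Set E} {b u v x y : E}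

theorem IsOpenCone.add_mem (hC : IsOpenCone C) (hu : u ∈ C) (hv : v ∈ C) : u + v ∈ C := by
  have h := hC.2.2.2.1 2 two_pos _ (hC.2.2.1 hu hv (by norm_num : (0 : ℝ) ≤ 1 / 2)
    (by norm_num : (0 : ℝ) ≤ 1 / 2) (by norm_num))
  convert h using 1
  module

theorem IsOpenCone.smul_mem_closure (hC : IsOpenCone C) {c : ℝ} (hc : 0 < c)
    (hu : u ∈ closure C) : c • u ∈ closure C :=
  map_mem_closure (continuous_const_smul c) hu fun v hv => hC.2.2.2.1 c hc v hv

open scoped Pointwise in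
theorem IsOpenCone.add_mem_of_mem_closure (hC : IsOpenCone C) (hu : u ∈ C)
    (hv : v ∈ closure C) : u + v ∈ C := by
  obtain ⟨a, ha, a', ha', haa'⟩ : u + v ∈ C + C := hC.2.1.add_closure C ▸ add_mem_add hu hv
  exact haa' ▸ hC.add_mem ha ha'

theorem IsOpenCone.smul_sub_mem_of_norm_lt (hC : IsOpenCone C) {ε : ℝ}
    (hball : Metric.ball u ε ⊆ C) {l : ℝ} (hl : 0 < l) (hy : ‖y‖ < l * ε) : l • u - y ∈ C := by
  have hmem : u - l⁻¹ • y ∈ C := by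
    refine hball ?_
    rw [Metric.mem_ball, dist_eq_norm, sub_sub_cancel_left, norm_neg, norm_smul, norm_inv,
      Real.norm_of_nonneg hl.le, inv_mul_lt_iff₀ hl]
    exact hy
  convert hC.2.2.2.1 l hl _ hmem using 1
  rw [smul_sub, smul_inv_smul₀ hl.ne']

theorem IsOpenCone.exists_smul_sub_mem (hC : IsOpenCone C) (hu : u ∈ C) (y : E) :
    ∃ l : ℝ, 0 < l ∧ l • u - y ∈ C := by
  obtain ⟨ε, hε, hball⟩ := Metric.isOpen_iff.1 hC.2.1 u hu
  refine ⟨‖y‖ / ε + 1, by positivity, hC.smul_sub_mem_of_norm_lt hball (by positivity) ?_⟩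
  rw [add_mul, div_mul_cancel₀ _ hε.ne', one_mul]
  linarith

theorem funkM_nonneg : 0 ≤ funkM C y u :=
  Real.sInf_nonneg fun _ hl => hl.1.le

theorem funkM_le {l : ℝ} (hl : 0 < l) (h : l • u - y ∈ closure C) : funkM C y u ≤ l :=
  csInf_le ⟨0, fun _ hm => hm.1.le⟩ ⟨hl, h⟩

theorem funkM_smul_sub_mem_closure (hC : IsOpenCone C) (hu : u ∈ C) :
    funkM C y u • u - y ∈ closure C := by
  obtain ⟨l, hl, hlu⟩ := hC.exists_smul_sub_mem hu y
  have hclosed : IsClosed {l : ℝ | l • u - y ∈ closure C} :=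
    isClosed_closure.preimage (by fun_prop)
  exact hclosed.closure_subset_iff.2 (fun _ hm => hm.2)
    (csInf_mem_closure ⟨l, hl, subset_closure hlu⟩ ⟨0, fun _ hm => hm.1.le⟩)

theorem smul_sub_mem_closure_of_funkM_le (hC : IsOpenCone C) (hu : u ∈ C) {l : ℝ}
    (h : funkM C y u ≤ l) : l • u - y ∈ closure C := by
  rcases h.eq_or_lt with rfl | hlt
  · exact funkM_smul_sub_mem_closure hC hu
  · have h := hC.add_mem_of_mem_closure (hC.2.2.2.1 _ (sub_pos.2 hlt) u hu)
      (funkM_smul_sub_mem_closure hC hu (y := y))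
    convert subset_closure h using 1
    module

theorem funkM_pos (hC : IsOpenCone C) (hlines : ∀ v, v ∈ closure C → -v ∈ closure C → v = 0)
    (hu : u ∈ C) (hy : y ∈ closure C) (hy0 : y ≠ 0) : 0 < funkM C y u := by
  refine funkM_nonneg.lt_of_ne fun h => hy0 (hlines y hy ?_)
  simpa [← h] using funkM_smul_sub_mem_closure hC hu (y := y)

theorem funkM_le_funkM_add (hC : IsOpenCone C) {ε : ℝ} (hε : 0 < ε)
    (hball : Metric.ball u ε ⊆ C) (y z : E) :
    funkM C y u ≤ funkM C z u + ‖y - z‖ / ε := by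
  refine le_of_forall_pos_le_add fun δ hδ => ?_
  have ht : 0 < ‖y - z‖ / ε + δ := by positivity
  have hw : (‖y - z‖ / ε + δ) • u - (y - z) ∈ C := by
    refine hC.smul_sub_mem_of_norm_lt hball ht ?_
    rw [add_mul, div_mul_cancel₀ _ hε.ne']
    linarith [mul_pos hδ hε]
  have h := hC.add_mem_of_mem_closure hw
    (funkM_smul_sub_mem_closure hC (hball (Metric.mem_ball_self hε)) (y := z))
  rw [add_assoc]
  refine funkM_le (add_pos_of_nonneg_of_pos funkM_nonneg ht) ?_
  convert subset_closure h using 1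
  module

theorem continuous_funkM (hC : IsOpenCone C) (hu : u ∈ C) : Continuous fun y => funkM C y u := by
  obtain ⟨ε, hε, hball⟩ := Metric.isOpen_iff.1 hC.2.1 u hu
  refine (LipschitzWith.of_le_add_mul' ε⁻¹ fun y z => ?_).continuous
  rw [dist_eq_norm, inv_mul_eq_div]
  exact funkM_le_funkM_add hC hε hball y z

theorem continuousAt_revF (hC : IsOpenCone C)
    (hlines : ∀ v, v ∈ closure C → -v ∈ closure C → v = 0) (hu : u ∈ C)
    (hx : x ∈ closure C) (hx0 : x ≠ 0) : ContinuousAt (revF C u) x :=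
  (continuous_funkM hC hu).continuousAt.log (funkM_pos hC hlines hu hx hx0).ne'

theorem smul_sub_mem_closure_of_funkM_le_mul (hC : IsOpenCone C) (hb : b ∈ C)
    (hy : y ∈ closure C) {c : ℝ} (hc : 0 ≤ c) (h : ∀ u ∈ C, funkM C x u ≤ c * funkM C y u) :
    c • y - x ∈ closure C := by
  obtain ⟨k, hk, hkb⟩ := hC.exists_smul_sub_mem hb y
  have hmem : ∀ t > 0, (c * k / (t + k)) • (t • b + y) - x ∈ closure C := by
    intro t ht
    have hut : t • b + y ∈ C := hC.add_mem_of_mem_closure (hC.2.2.2.1 t ht b hb) hy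
    have hyu : funkM C y (t • b + y) ≤ k / (t + k) := by
      refine funkM_le (by positivity) ?_
      convert hC.smul_mem_closure (c := t / (t + k)) (by positivity) (subset_closure hkb) using 1
      match_scalars
      · field_simp
      · field_simp; ring
    refine smul_sub_mem_closure_of_funkM_le hC hut ((h _ hut).trans ?_)
    rw [mul_div_assoc]
    exact mul_le_mul_of_nonneg_left hyu hc
  have hlim : Tendsto (fun t : ℝ => (c * k / (t + k)) • (t • b + y) - x) (𝓝[>] 0)
      (𝓝 (c • y - x)) := by
    have hcont : ContinuousAt (fun t : ℝ => (c * k / (t + k)) • (t • b + y) - x) 0 := by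
      have : (0 : ℝ) + k ≠ 0 := by simpa using hk.ne'
      fun_prop (disch := exact this)
    simpa [hk.ne'] using hcont.tendsto.mono_left nhdsWithin_le_nhds
  exact isClosed_closure.mem_of_tendsto hlim (eventually_nhdsWithin_of_forall hmem)

theorem eq_smul_of_funkM_eq_mul (hC : IsOpenCone C)
    (hlines : ∀ v, v ∈ closure C → -v ∈ closure C → v = 0) (hb : b ∈ C)
    (hx : x ∈ closure C) (hy : y ∈ closure C) {c : ℝ} (hc : 0 < c)
    (h : ∀ u ∈ C, funkM C x u = c * funkM C y u) : x = c • y := by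
  have hyx := smul_sub_mem_closure_of_funkM_le_mul hC hb hy hc.le fun u hu => (h u hu).le
  have hxy := smul_sub_mem_closure_of_funkM_le_mul (x := y) (y := x) hC hb hx (inv_nonneg.2 hc.le)
    fun u hu => by rw [h u hu, inv_mul_cancel_left₀ hc.ne']
  have hneg : -(c • y - x) ∈ closure C := by
    convert hC.smul_mem_closure hc hxy using 1
    rw [smul_sub, smul_inv_smul₀ hc.ne', neg_sub]
  exact (sub_eq_zero.1 (hlines _ hyx hneg)).symm

theorem eq_of_revF_sub_revF_eq (hC : IsOpenCone C)
    (hlines : ∀ v, v ∈ closure C → -v ∈ closure C → v = 0) (hb : b ∈ C)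
    (ψ : E →L[ℝ] ℝ) (hx : x ∈ closure C) (hxψ : ψ x = 1) (hy : y ∈ closure C) (hyψ : ψ y = 1)
    (h : ∀ u ∈ C, revF C u x - revF C b x = revF C u y - revF C b y) : x = y := by
  have hexp : ∀ {z}, z ∈ closure C → ψ z = 1 → ∀ u ∈ C, funkM C z u = Real.exp (revF C u z) :=
    fun hz hzψ u hu => (Real.exp_log (funkM_pos hC hlines hu hz (by rintro rfl; simp at hzψ))).symm
  set c := Real.exp (revF C b x - revF C b y)
  have hxy : x = c • y := eq_smul_of_funkM_eq_mul hC hlines hb hx hy (Real.exp_pos _)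
    fun u hu => by
      rw [hexp hx hxψ u hu, hexp hy hyψ u hu, ← Real.exp_add]
      congr 1
      linarith [h u hu]
  have hc : 1 = c := by simpa [hxψ, hyψ] using congrArg ψ hxy
  rw [hxy, ← hc, one_smul]

theorem closure_sep_subset (ψ : E →L[ℝ] ℝ) :
    closure {u | u ∈ C ∧ ψ u = 1} ⊆ {u | u ∈ closure C ∧ ψ u = 1} :=
  closure_minimal (fun _ hu => ⟨subset_closure hu.1, hu.2⟩)
    (isClosed_closure.inter (isClosed_eq ψ.continuous continuous_const))

end FunkGauge

theorem revF_convergence_iff_usual_general (C : Set V) (hC : IsOpenCone C)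
    (hlines : ∀ v, v ∈ closure C → -v ∈ closure C → v = 0)
    (ψ : V →L[ℝ] ℝ)
    (D : Set V) (hD : D = {u | u ∈ C ∧ ψ u = 1}) (hDc : IsCompact (closure D))
    (b : V) (hb : b ∈ D) :
    (∀ x ∈ closure D, ∀ xs : ℕ → V, (∀ n, xs n ∈ D) → Tendsto xs atTop (𝓝 x) →
        ∀ u ∈ C, Tendsto (fun n => revF C u (xs n) - revF C b (xs n)) atTop
          (𝓝 (revF C u x - revF C b x))) ∧
    (∀ x ∈ closure D \ D, ∀ xs : ℕ → V, (∀ n, xs n ∈ D) →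
        ((∀ u ∈ C, Tendsto (fun n => revF C u (xs n) - revF C b (xs n)) atTop
            (𝓝 (revF C u x - revF C b x))) ↔ Tendsto xs atTop (𝓝 x))) := by
  have hclD : closure D ⊆ {u | u ∈ closure C ∧ ψ u = 1} := hD ▸ closure_sep_subset ψ
  have hbC : b ∈ C := (hD ▸ hb).1
  have hcont : ∀ x ∈ closure D, ∀ u ∈ C, ContinuousAt (fun z => revF C u z - revF C b z) x := by
    intro x hx u hu
    obtain ⟨hxC, hxψ⟩ := hclD hx
    have hx0 : x ≠ 0 := by rintro rfl; simp at hxψ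
    exact (continuousAt_revF hC hlines hu hxC hx0).sub (continuousAt_revF hC hlines hbC hxC hx0)
  have hpart1 : ∀ x ∈ closure D, ∀ xs : ℕ → V, (∀ n, xs n ∈ D) → Tendsto xs atTop (𝓝 x) →
      ∀ u ∈ C, Tendsto (fun n => revF C u (xs n) - revF C b (xs n)) atTop
        (𝓝 (revF C u x - revF C b x)) :=
    fun x hx xs _ hxs u hu => (hcont x hx u hu).tendsto.comp hxs
  refine ⟨hpart1, fun x hx xs hxsD => ⟨fun hconv => ?_, hpart1 x hx.1 xs hxsD⟩⟩
  refine hDc.tendsto_nhds_of_unique_mapClusterPt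
    (Eventually.of_forall fun n => subset_closure (hxsD n)) fun y hy hyx => ?_
  obtain ⟨hyC, hyψ⟩ := hclD hy
  obtain ⟨hxC, hxψ⟩ := hclD hx.1
  exact eq_of_revF_sub_revF_eq hC hlines hbC ψ hyC hyψ hxC hxψ fun u hu =>
    (hyx.continuousAt_comp (hcont y hy u hu)).eq_of_tendsto (hconv u hu)

/-- convergence in the reverse Funk sense versus usual convergence for
sequences in a compact cross section of a cone containing no lines. -/
theorem revF_convergence_iff_usual (C : Set V) (hC : IsOpenCone C)
    (hlines : ∀ v, v ∈ closure C → -v ∈ closure C → v = 0)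
    (ψ : V →L[ℝ] ℝ) (hψ : ∀ u ∈ closure C, u ≠ 0 → 0 < ψ u)
    (D : Set V) (hD : D = {u | u ∈ C ∧ ψ u = 1}) (hDc : IsCompact (closure D))
    (b : V) (hb : b ∈ D) :
    (∀ x ∈ closure D, ∀ xs : ℕ → V, (∀ n, xs n ∈ D) → Tendsto xs atTop (𝓝 x) →
        ∀ u ∈ C, Tendsto (fun n => revF C u (xs n) - revF C b (xs n)) atTop
          (𝓝 (revF C u x - revF C b x))) ∧
    (∀ x ∈ closure D \ D, ∀ xs : ℕ → V, (∀ n, xs n ∈ D) →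
        ((∀ u ∈ C, Tendsto (fun n => revF C u (xs n) - revF C b (xs n)) atTop
            (𝓝 (revF C u x - revF C b x))) ↔ Tendsto xs atTop (𝓝 x))) :=
  revF_convergence_iff_usual_general C hC hlines ψ D hD hDc b hb
end

section
/- Let T be an open convex cone, x a boundary point of T, and y ∈ T. Set y_λ := (1−λ)x + λy for λ ∈ (0,1). Then for every z ∈ T, the difference F_T(z, y_λ) − F_{τ(T,x)}(z, y_λ) tends to 0 as λ → 0, where τ(T,x) is the open tangent cone to T at x. -/
open Set Filter Topology

variable {V : Type*} [NormedAddCommGroup V] [NormedSpace ℝ V] [FiniteDimensional ℝ V]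

/-!
The tangent cone `τ = τ(T,x)` is an open cone containing `T` whose closure is stable under
adding `-x`. Hence `m • y_λ - z ∈ closure τ` forces `(λ m) • y - z ∈ closure τ`, i.e.
`λ M_τ(z, y_λ) ≥ M_τ(z, y)`. Conversely, if `m > M_τ(z, y)` then `m • y - z` lies in the open
cone `τ`, so `p = m⁻¹ • (m • y - z) - x ∈ τ` and `x + λ p ∈ T` for small `λ`, which says
`λ M_T(z, y_λ) ≤ m`. Since `T ⊆ τ` gives `M_τ ≤ M_T`, both `λ M_T(z, y_λ)` and
`λ M_τ(z, y_λ)` tend to `M_τ(z, y) > 0`, and the difference of their logarithms tends to `0`.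
-/

section

variable {E : Type*} [NormedAddCommGroup E] [NormedSpace ℝ E]

theorem funkM_le_s14 {S : Set E} {z y : E} {m : ℝ} (hm : 0 < m) (h : m • y - z ∈ closure S) :
    funkM S z y ≤ m :=
  csInf_le ⟨0, fun _ h ↦ h.1.le⟩ ⟨hm, h⟩

theorem funkM_le_funkM_of_subset {S S' : Set E} (h : S ⊆ S') {z y : E}
    (hne : ∃ m : ℝ, 0 < m ∧ m • y - z ∈ closure S) : funkM S' z y ≤ funkM S z y := by
  obtain ⟨m, hm, hmS⟩ := hne
  exact csInf_le_csInf ⟨0, fun _ h ↦ h.1.le⟩ ⟨m, hm, hmS⟩ fun m hm ↦ ⟨hm.1, closure_mono h hm.2⟩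

namespace IsOpenCone

variable {S : Set E} {u v y z : E} {c : ℝ}

theorem isOpen (hS : IsOpenCone S) : IsOpen S := hS.2.1

theorem convex (hS : IsOpenCone S) : Convex ℝ S := hS.2.2.1

theorem smul_mem (hS : IsOpenCone S) (hc : 0 < c) (hu : u ∈ S) : c • u ∈ S :=
  hS.2.2.2.1 c hc u hu

theorem zero_notMem (hS : IsOpenCone S) : (0 : E) ∉ S := hS.2.2.2.2

theorem smul_mem_closure_s14 (hS : IsOpenCone S) (hc : 0 < c) (hu : u ∈ closure S) :
    c • u ∈ closure S :=
  map_mem_closure (continuous_const_smul c) hu fun _ ↦ hS.smul_mem hc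

theorem add_mem_of_mem_closure_s14 (hS : IsOpenCone S) (hu : u ∈ closure S) (hv : v ∈ S) :
    u + v ∈ S := by
  have h := hS.convex.combo_interior_closure_mem_interior (hS.isOpen.interior_eq.symm ▸ hv) hu
    (a := 1 / 2) (b := 1 / 2) (by norm_num) (by norm_num) (by norm_num)
  rw [hS.isOpen.interior_eq] at h
  convert hS.smul_mem two_pos h using 1
  module

theorem add_mem_closure (hS : IsOpenCone S) (hu : u ∈ closure S) (hv : v ∈ closure S) :
    u + v ∈ closure S := by
  have h := hS.convex.closure hu hv (a := 1 / 2) (b := 1 / 2) (by norm_num) (by norm_num)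
    (by norm_num)
  convert hS.smul_mem_closure_s14 two_pos h using 1
  module

theorem neg_notMem_closure (hS : IsOpenCone S) (hu : u ∈ S) : -u ∉ closure S := fun h ↦
  hS.zero_notMem (by simpa using hS.add_mem_of_mem_closure_s14 h hu)

theorem exists_smul_sub_mem_s14 (hS : IsOpenCone S) (hy : y ∈ S) (z : E) :
    ∃ m : ℝ, 0 < m ∧ m • y - z ∈ S := by
  have hlim : Tendsto (fun t : ℝ ↦ y - t • z) (𝓝[>] 0) (𝓝 y) :=
    ((continuous_const.sub (continuous_id.smul continuous_const)).tendsto' (0 : ℝ) y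
      (by simp)).mono_left nhdsWithin_le_nhds
  obtain ⟨t, ht, ht0⟩ :=
    ((hlim.eventually (hS.isOpen.mem_nhds hy)).and self_mem_nhdsWithin).exists
  refine ⟨t⁻¹, inv_pos.2 ht0, ?_⟩
  convert hS.smul_mem (inv_pos.2 ht0) ht using 1
  rw [smul_sub, smul_smul, inv_mul_cancel₀ ht0.ne', one_smul]

theorem funkM_pos (hS : IsOpenCone S) (hy : y ∈ S) (hz : z ∈ S) : 0 < funkM S z y := by
  have hclosed : IsClosed {m : ℝ | m • y - z ∈ closure S} :=
    isClosed_closure.preimage (by fun_prop)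
  have h0 : (0 : ℝ) ∉ {m : ℝ | m • y - z ∈ closure S} := by
    simpa using hS.neg_notMem_closure hz
  obtain ⟨δ, hδ, hball⟩ := Metric.isOpen_iff.1 hclosed.isOpen_compl 0 h0
  obtain ⟨m, hm, hmS⟩ := hS.exists_smul_sub_mem_s14 hy z
  refine hδ.trans_le (le_csInf ⟨m, hm, subset_closure hmS⟩ fun m' ⟨hm', hm'S⟩ ↦ ?_)
  by_contra! h
  exact hball (by simpa [abs_of_pos hm'] using h) hm'S

theorem funkM_le_mul_funkM_smul_add (hS : IsOpenCone S) (hc : 0 < c) (hu : -u ∈ closure S)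
    (hw : c • y + u ∈ S) (z : E) : funkM S z y ≤ c * funkM S z (c • y + u) := by
  obtain ⟨m, hm, hmS⟩ := hS.exists_smul_sub_mem_s14 hw z
  rw [← div_le_iff₀' hc]
  refine le_csInf ⟨m, hm, subset_closure hmS⟩ fun m' ⟨hm', hm'S⟩ ↦ ?_
  rw [div_le_iff₀' hc]
  apply funkM_le_s14 (mul_pos hc hm')
  convert hS.add_mem_closure hm'S (hS.smul_mem_closure_s14 hm' hu) using 1
  module

end IsOpenCone

section openTangent

variable {T : Set E} {x v : E}

theorem mem_openTangent_iff : v ∈ openTangent T x ↔ ∃ t : ℝ, 0 < t ∧ x + t • v ∈ T := by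
  constructor
  · rintro ⟨l, hl, w, hw, rfl⟩
    refine ⟨l⁻¹, inv_pos.2 hl, ?_⟩
    rwa [smul_smul, inv_mul_cancel₀ hl.ne', one_smul, add_sub_cancel]
  · rintro ⟨t, ht, h⟩
    refine ⟨t⁻¹, inv_pos.2 ht, _, h, ?_⟩
    rw [add_sub_cancel_left, smul_smul, inv_mul_cancel₀ ht.ne', one_smul]

namespace IsOpenCone

theorem eventually_add_smul_mem (hT : IsOpenCone T) (hx : x ∈ closure T)
    (hv : v ∈ openTangent T x) : ∀ᶠ t in 𝓝[>] (0 : ℝ), x + t • v ∈ T := by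
  obtain ⟨t₀, ht₀, hmem⟩ := mem_openTangent_iff.1 hv
  filter_upwards [Ioo_mem_nhdsGT ht₀] with t ht
  have h := hT.convex.add_smul_mem_interior' hx (hT.isOpen.interior_eq.symm ▸ hmem)
    ⟨div_pos ht.1 ht₀, (div_le_one ht₀).2 ht.2.le⟩
  rwa [hT.isOpen.interior_eq, smul_smul, div_mul_cancel₀ _ ht₀.ne'] at h

theorem one_sub_smul_add_smul_mem (hT : IsOpenCone T) (hx : x ∈ closure T) {y : E}
    (hy : y ∈ T) {l : ℝ} (hl : 0 < l) (hl1 : l ≤ 1) : (1 - l) • x + l • y ∈ T := by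
  have h := hT.convex.add_smul_sub_mem_interior' hx (hT.isOpen.interior_eq.symm ▸ hy) ⟨hl, hl1⟩
  rw [hT.isOpen.interior_eq] at h
  convert h using 1
  module

theorem subset_openTangent (hT : IsOpenCone T) (hx : x ∈ closure T) : T ⊆ openTangent T x :=
  fun v hv ↦ mem_openTangent_iff.2 ⟨1, one_pos, by simpa using hT.add_mem_of_mem_closure_s14 hx hv⟩

theorem neg_mem_closure_openTangent (hT : IsOpenCone T) : -x ∈ closure (openTangent T x) := by
  obtain ⟨w, hw⟩ := hT.1
  have hlim : Tendsto (fun t : ℝ ↦ t • w - x) (𝓝[>] 0) (𝓝 (-x)) :=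
    ((continuous_id.smul continuous_const).sub continuous_const |>.tendsto' (0 : ℝ) (-x)
      (by simp)).mono_left nhdsWithin_le_nhds
  refine mem_closure_of_tendsto hlim ?_
  filter_upwards [self_mem_nhdsWithin] with t ht
  exact mem_openTangent_iff.2 ⟨1, one_pos, by simpa using hT.smul_mem ht hw⟩

end IsOpenCone

theorem isOpenCone_openTangent (hT : IsOpenCone T) (hx : x ∈ frontier T) :
    IsOpenCone (openTangent T x) := by
  have hxc : x ∈ closure T := frontier_subset_closure hx
  refine ⟨hT.1.mono (hT.subset_openTangent hxc), ?_, ?_, ?_, ?_⟩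
  · have h : openTangent T x = ⋃ t : {t : ℝ // 0 < t}, (fun v ↦ x + t.1 • v) ⁻¹' T := by
      ext v
      simp only [mem_iUnion, mem_preimage, mem_openTangent_iff, Subtype.exists, exists_prop]
    rw [h]
    exact isOpen_iUnion fun t ↦ hT.isOpen.preimage (by fun_prop)
  · intro v₁ h₁ v₂ h₂ a b ha hb hab
    obtain ⟨t, ⟨m₁, m₂⟩, ht⟩ := ((hT.eventually_add_smul_mem hxc h₁).and
      (hT.eventually_add_smul_mem hxc h₂)).and self_mem_nhdsWithin |>.exists
    refine mem_openTangent_iff.2 ⟨t, ht, ?_⟩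
    convert hT.convex m₁ m₂ ha hb hab using 1
    obtain rfl : b = 1 - a := by linarith
    module
  · rintro c hc v hv
    obtain ⟨t, ht, hmem⟩ := mem_openTangent_iff.1 hv
    exact mem_openTangent_iff.2 ⟨t / c, div_pos ht hc, by rwa [smul_smul, div_mul_cancel₀ _ hc.ne']⟩
  · intro h0
    obtain ⟨t, -, hmem⟩ := mem_openTangent_iff.1 h0
    rw [smul_zero, add_zero] at hmem
    exact hx.2 (hT.isOpen.interior_eq.symm ▸ hmem)

theorem funkM_openTangent_le (hT : IsOpenCone T) (hx : x ∈ closure T) {w : E} (hw : w ∈ T)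
    (z : E) : funkM (openTangent T x) z w ≤ funkM T z w := by
  obtain ⟨m, hm, hmT⟩ := hT.exists_smul_sub_mem_s14 hw z
  exact funkM_le_funkM_of_subset (hT.subset_openTangent hx) ⟨m, hm, subset_closure hmT⟩

variable {y : E}

theorem eventually_funkM_openTangent_le_mul_funkM_segment (hT : IsOpenCone T)
    (hx : x ∈ frontier T) (hy : y ∈ T) (z : E) :
    ∀ᶠ l in 𝓝[>] (0 : ℝ), funkM (openTangent T x) z y
        ≤ l * funkM (openTangent T x) z ((1 - l) • x + l • y) ∧
      funkM (openTangent T x) z ((1 - l) • x + l • y) ≤ funkM T z ((1 - l) • x + l • y) := by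
  have hxc : x ∈ closure T := frontier_subset_closure hx
  have hτ := isOpenCone_openTangent hT hx
  filter_upwards [Ioo_mem_nhdsGT one_pos] with l ⟨hl, hl1⟩
  have hw := hT.one_sub_smul_add_smul_mem hxc hy hl hl1.le
  have hu : -((1 - l) • x) ∈ closure (openTangent T x) := by
    rw [← smul_neg]
    exact hτ.smul_mem_closure_s14 (sub_pos.2 hl1) hT.neg_mem_closure_openTangent
  refine ⟨?_, funkM_openTangent_le hT hxc hw z⟩
  rw [add_comm] at hw ⊢
  exact hτ.funkM_le_mul_funkM_smul_add hl hu (hT.subset_openTangent hxc hw) z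

theorem eventually_mul_funkM_segment_le (hT : IsOpenCone T) (hx : x ∈ frontier T) (hy : y ∈ T)
    (z : E) {m : ℝ} (hm : funkM (openTangent T x) z y < m) :
    ∀ᶠ l in 𝓝[>] (0 : ℝ), l * funkM T z ((1 - l) • x + l • y) ≤ m := by
  have hxc : x ∈ closure T := frontier_subset_closure hx
  have hτ := isOpenCone_openTangent hT hx
  have hyτ := hT.subset_openTangent hxc hy
  obtain ⟨a, ha, haτ⟩ := hτ.exists_smul_sub_mem_s14 hyτ z
  obtain ⟨m', ⟨hm', hm'τ⟩, hm'm⟩ :=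
    exists_lt_of_csInf_lt (s := {l : ℝ | 0 < l ∧ l • y - z ∈ closure (openTangent T x)})
      ⟨a, ha, subset_closure haτ⟩ hm
  have hm0 : 0 < m := hm'.trans hm'm
  have hq : m • y - z ∈ openTangent T x := by
    convert hτ.add_mem_of_mem_closure_s14 hm'τ (hτ.smul_mem (sub_pos.2 hm'm) hyτ) using 1
    module
  have hp : -x + m⁻¹ • (m • y - z) ∈ openTangent T x :=
    hτ.add_mem_of_mem_closure_s14 hT.neg_mem_closure_openTangent (hτ.smul_mem (inv_pos.2 hm0) hq)
  filter_upwards [hT.eventually_add_smul_mem hxc hp, self_mem_nhdsWithin] with l hl (hl0 : 0 < l)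
  rw [← le_div_iff₀' hl0]
  refine funkM_le_s14 (div_pos hm0 hl0) (subset_closure ?_)
  convert hT.smul_mem (div_pos hm0 hl0) hl using 1
  match_scalars <;> field_simp
  ring

theorem tendsto_mul_funkM_segment (hT : IsOpenCone T) (hx : x ∈ frontier T) (hy : y ∈ T)
    (z : E) : Tendsto (fun l ↦ l * funkM T z ((1 - l) • x + l • y)) (𝓝[>] 0)
      (𝓝 (funkM (openTangent T x) z y)) := by
  refine tendsto_order.2 ⟨fun a ha ↦ ?_, fun b hb ↦ ?_⟩
  · filter_upwards [eventually_funkM_openTangent_le_mul_funkM_segment hT hx hy z,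
      self_mem_nhdsWithin] with l ⟨hτ, hτT⟩ (hl : 0 < l)
    exact ha.trans_le (hτ.trans (mul_le_mul_of_nonneg_left hτT hl.le))
  · obtain ⟨m, hm, hmb⟩ := exists_between hb
    filter_upwards [eventually_mul_funkM_segment_le hT hx hy z hm] with l hl
    exact hl.trans_lt hmb

end openTangent

end

/-- along a segment toward a boundary point `x` of `T`, the Funk distances
from a fixed point `z` measured in `T` and in the open tangent cone `τ(T,x)` agree in
the limit. -/
theorem funkF_tangent_difference_tendsto_zero (T : Set V) (hT : IsOpenCone T)
    (x : V) (hx : x ∈ frontier T) (y : V) (hy : y ∈ T) (z : V) (hz : z ∈ T) :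
    Tendsto (fun l : ℝ => funkF T z ((1 - l) • x + l • y)
        - funkF (openTangent T x) z ((1 - l) • x + l • y)) (𝓝[>] (0 : ℝ)) (𝓝 0) := by
  have hxc : x ∈ closure T := frontier_subset_closure hx
  have hM : 0 < funkM (openTangent T x) z y := (isOpenCone_openTangent hT hx).funkM_pos
    (hT.subset_openTangent hxc hy) (hT.subset_openTangent hxc hz)
  have hbounds := eventually_funkM_openTangent_le_mul_funkM_segment hT hx hy z
  have hTlim := tendsto_mul_funkM_segment hT hx hy z
  have hτlim : Tendsto (fun l ↦ l * funkM (openTangent T x) z ((1 - l) • x + l • y)) (𝓝[>] 0)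
      (𝓝 (funkM (openTangent T x) z y)) := by
    refine tendsto_of_tendsto_of_tendsto_of_le_of_le' tendsto_const_nhds hTlim
      (hbounds.mono fun _ h ↦ h.1) ?_
    filter_upwards [hbounds, self_mem_nhdsWithin] with l h (hl : 0 < l)
    exact mul_le_mul_of_nonneg_left h.2 hl.le
  have hlog := (hTlim.log hM.ne').sub (hτlim.log hM.ne')
  rw [sub_self] at hlog
  refine hlog.congr' ?_
  filter_upwards [hbounds, self_mem_nhdsWithin] with l ⟨hMτ, hτT⟩ (hl : 0 < l)
  have hτpos := pos_of_mul_pos_right (hM.trans_le hMτ) hl.le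
  rw [Real.log_mul hl.ne' hτpos.ne', Real.log_mul hl.ne' (hτpos.trans_le hτT).ne']
  simp only [funkF]
  ring
end
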